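/- Let A be a finite group, S a normal subgroup of A whose index [A : S] is a power of 2, Q a Sylow 2-subgroup of A, and P = S ∩ Q. Suppose that N_S(P) has a normal 2-complement centralizing P; that is, there is a subgroup V of S of odd order such that every element of V commutes with every element of P, P ∩ V = {1}, and N_S(P) = P·V. Then N_A(Q) has a normal 2-complement: there exists a normal subgroup W of N_A(Q) of odd order such that W·Q = N_A(Q) and W ∩ Q = {1}. -/

import Mathlib

/-!
Since `[A : S]` is a power of `2` and `[A : Q]` is odd, `A = S Q`. Hence every `x ∈ N_A(Q)`
is `s q` with `s ∈ S ∩ N_A(Q) ≤ N_S(P) = P V`, so `x = v (p q)` with `v ∈ V ∩ N_A(Q)`.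
Such a `v` centralizes `Q`: the commutator `c = q⁻¹ (v q v⁻¹)` lies in `S ∩ Q = P`, so it
commutes with `v`, whence `v ^ n q v ^ (-n) = q c ^ n`; taking `n` the odd order of `v`
kills the `2`-element `c`. Thus `V ∩ N_A(Q)` is a normal complement of `Q` in `N_A(Q)`.
-/

open Subgroup

section

variable {G : Type*} [Group G]

theorem Sylow.sup_eq_top_of_index_eq_pow [Finite G] {p : ℕ} [Fact p.Prime] (P : Sylow p G)
    {S : Subgroup G} {k : ℕ} (hS : S.index = p ^ k) : S ⊔ P = ⊤ := by
  have hcop : (p ^ k).Coprime P.index :=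
    ((Nat.Prime.coprime_iff_not_dvd Fact.out).2 P.not_dvd_index).pow_left k
  exact index_eq_one.mp <| Nat.eq_one_of_dvd_coprimes hcop
    (hS ▸ index_dvd_of_le le_sup_left) (index_dvd_of_le le_sup_right)

theorem conj_pow_eq_mul_pow {g q c : G} (hconj : g * q * g⁻¹ = q * c) (hgc : Commute g c)
    (n : ℕ) : g ^ n * q * (g ^ n)⁻¹ = q * c ^ n := by
  induction n with
  | zero => simp
  | succ n ih =>
    calc g ^ (n + 1) * q * (g ^ (n + 1))⁻¹ = g * (g ^ n * q * (g ^ n)⁻¹) * g⁻¹ := by group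
      _ = (g * q * g⁻¹) * (g * c ^ n * g⁻¹) := by rw [ih]; group
      _ = q * c ^ (n + 1) := by rw [hconj, (hgc.pow_right n).eq, pow_succ']; group

theorem commute_of_conj_eq_mul_of_coprime {g q c : G} (hconj : g * q * g⁻¹ = q * c)
    (hgc : Commute g c) (hcop : (orderOf c).Coprime (orderOf g)) : Commute g q := by
  have hc : c = 1 := by
    have h := conj_pow_eq_mul_pow hconj hgc (orderOf g)
    rw [pow_orderOf_eq_one, one_mul, inv_one, mul_one, left_eq_mul] at h
    exact orderOf_eq_one_iff.mp (hcop.eq_one_of_dvd (orderOf_dvd_of_pow_eq_one h))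
  rw [hc, mul_one] at hconj
  exact mul_inv_eq_iff_eq_mul.mp hconj

theorem mem_centralizer_of_mem_normalizer_of_coprime {S Q : Subgroup G} [S.Normal] {p : ℕ}
    (hQ : IsPGroup p Q) {g : G} (hgS : g ∈ S) (hgN : g ∈ normalizer (Q : Set G))
    (hg : p.Coprime (orderOf g)) (hcomm : ∀ c ∈ S ⊓ Q, Commute g c) : g ∈ centralizer Q := by
  refine mem_centralizer_iff.mpr fun q hq => Eq.symm ?_
  obtain ⟨c, hc⟩ : ∃ c, c = q⁻¹ * (g * q * g⁻¹) := ⟨_, rfl⟩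
  have hcQ : c ∈ Q := hc ▸ mul_mem (inv_mem hq) ((mem_normalizer_iff.mp hgN q).mp hq)
  have hcS : c ∈ S := by
    have : c = (q⁻¹ * g * q⁻¹⁻¹) * g⁻¹ := by rw [hc]; group
    rw [this]
    exact mul_mem (‹S.Normal›.conj_mem g hgS q⁻¹) (inv_mem hgS)
  refine (commute_of_conj_eq_mul_of_coprime (c := c) (by rw [hc]; group)
    (hcomm c ⟨hcS, hcQ⟩) ?_).eq
  simpa using hQ.orderOf_coprime hg ⟨c, hcQ⟩

theorem exists_mem_mul_of_mem_normalizer {S Q V : Subgroup G} [S.Normal] (hsup : S ⊔ Q = ⊤)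
    (hNS : ∀ x ∈ S ⊓ normalizer ((S ⊓ Q : Subgroup G) : Set G), ∃ p ∈ S ⊓ Q, ∃ v ∈ V, x = p * v)
    (hcent : V ⊓ normalizer (Q : Set G) ≤ centralizer Q) {x : G}
    (hx : x ∈ normalizer (Q : Set G)) :
    ∃ w ∈ V ⊓ normalizer (Q : Set G), ∃ q ∈ Q, x = w * q := by
  obtain ⟨s, hs, q, hq, rfl⟩ := mem_sup_of_normal_left.mp (hsup ▸ mem_top x : x ∈ S ⊔ Q)
  have hsN : s ∈ normalizer (Q : Set G) := by
    simpa using mul_mem hx (inv_mem (le_normalizer hq))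
  have hsNP : s ∈ normalizer ((S ⊓ Q : Subgroup G) : Set G) :=
    inf_normalizer_le_normalizer_inf ⟨le_normalizer_of_normal hs, hsN⟩
  obtain ⟨p, hp, w, hw, rfl⟩ := hNS s ⟨hs, hsNP⟩
  have hwN : w ∈ normalizer (Q : Set G) := by
    simpa using mul_mem (inv_mem (le_normalizer hp.2)) hsN
  have hwp : p * w = w * p := mem_centralizer_iff.mp (hcent ⟨hw, hwN⟩) p hp.2
  exact ⟨w, ⟨hw, hwN⟩, p * q, mul_mem hp.2 hq, by rw [hwp, mul_assoc]⟩

theorem normal_subgroupOf_of_le_centralizer {W Q N : Subgroup G} (hWQ : W ≤ centralizer Q)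
    (hN : ∀ x ∈ N, ∃ w ∈ W, ∃ q ∈ Q, x = w * q) : (W.subgroupOf N).Normal := by
  refine ⟨fun w hw x => ?_⟩
  rw [mem_subgroupOf] at hw ⊢
  obtain ⟨v, hv, q, hq, hx⟩ := hN x x.2
  have hqw : q * w * q⁻¹ = w := by
    rw [mem_centralizer_iff.mp (hWQ hw) q hq, mul_inv_cancel_right]
  have : ((x * w * x⁻¹ : N) : G) = v * (q * w * q⁻¹) * v⁻¹ := by
    simp only [coe_mul, coe_inv, hx]; group
  rw [this, hqw]
  exact mul_mem (mul_mem hv hw) (inv_mem hv)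

end

/-- Let `A` be a finite group, `S` a normal subgroup of `2`-power index, `Q` a Sylow
`2`-subgroup of `A`, and `P = S ⊓ Q`. If `N_S(P)` has a normal `2`-complement
centralizing `P`, i.e. `N_S(P) = P * V` with `V ≤ S` of odd order centralizing `P` and
`P ⊓ V = ⊥`, then `N_A(Q)` has a normal `2`-complement: a normal subgroup `W` of
`N_A(Q)` of odd order with `W * Q = N_A(Q)` and `W ⊓ Q = ⊥`. -/
theorem stmt4 {A : Type*} [Group A] [Fintype A] (S : Subgroup A) [S.Normal]
    (hidx : ∃ k : ℕ, S.index = 2 ^ k) (Q : Sylow 2 A) (V : Subgroup A) (hVS : V ≤ S)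
    (hVodd : Odd (Nat.card V))
    (hcomm : ∀ v ∈ V, ∀ p ∈ S ⊓ (Q : Subgroup A), Commute v p)
    (hPV : (S ⊓ (Q : Subgroup A)) ⊓ V = ⊥)
    (hNSP : ∀ x : A, x ∈ S ⊓ (Subgroup.normalizer ((S ⊓ (Q : Subgroup A) : Subgroup A) : Set A)) ↔
      ∃ p ∈ S ⊓ (Q : Subgroup A), ∃ v ∈ V, x = p * v) :
    ∃ W : Subgroup ↥(Subgroup.normalizer ((Q : Subgroup A) : Set A)), W.Normal ∧ Odd (Nat.card W) ∧
      (∀ x : ↥(Subgroup.normalizer ((Q : Subgroup A) : Set A)),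
        ∃ w ∈ W, ∃ q ∈ (Q : Subgroup A).subgroupOf (Subgroup.normalizer ((Q : Subgroup A) : Set A)),
          x = w * q) ∧
      W ⊓ (Q : Subgroup A).subgroupOf (Subgroup.normalizer ((Q : Subgroup A) : Set A)) = ⊥ := by
  set N := normalizer ((Q : Subgroup A) : Set A)
  obtain ⟨k, hk⟩ := hidx
  have hcent : V ⊓ N ≤ centralizer Q := fun v ⟨hv, hvN⟩ =>
    mem_centralizer_of_mem_normalizer_of_coprime Q.isPGroup' (hVS hv) hvN
      (Nat.coprime_two_left.mpr (hVodd.of_dvd_nat (V.orderOf_dvd_natCard hv))) (hcomm v hv)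
  have hdec : ∀ x ∈ N, ∃ w ∈ V ⊓ N, ∃ q ∈ (Q : Subgroup A), x = w * q := fun x hx =>
    exists_mem_mul_of_mem_normalizer (Q.sup_eq_top_of_index_eq_pow hk)
      (fun x hx => (hNSP x).mp hx) hcent hx
  have hdisj : V ⊓ N ⊓ Q = ⊥ :=
    le_bot_iff.mp (hPV ▸ fun x hx => ⟨⟨hVS hx.1.1, hx.2⟩, hx.1.1⟩)
  refine ⟨(V ⊓ N).subgroupOf N, normal_subgroupOf_of_le_centralizer hcent hdec, ?_, ?_, ?_⟩
  · rw [Nat.card_congr (subgroupOfEquivOfLe inf_le_right).toEquiv]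
    exact hVodd.of_dvd_nat (card_dvd_of_le inf_le_left)
  · intro x
    obtain ⟨w, hw, q, hq, hx⟩ := hdec x x.2
    exact ⟨⟨w, hw.2⟩, hw, ⟨q, le_normalizer hq⟩, hq, Subtype.ext hx⟩
  · rw [← bot_subgroupOf (H := N), ← hdisj]
    exact (comap_inf _ _ _).symm
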